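/- arXiv:2208.05363 — 3 statements merged into one kernel-verified Lean document; each statement's English description precedes it below -/
import Mathlib

section
/- Let H be a Hilbert space, ψ_1,…,ψ_n ∈ H, λ > 0, Λ = λ I_H + Σ_i ψ_i ψ_i*, K the Gram matrix, and for φ ∈ H let k(φ) = (⟨ψ_i, φ⟩)_i. Then φ = Ψ* (K + λ I)^{-1} k(φ) + λ Λ^{-1} φ, where Ψ* v = Σ_i v_i ψ_i. -/
open scoped RealInnerProductSpace Matrix BigOperators

/-- `φ = Ψ* (K + λ I)⁻¹ k(φ) + λ Λ⁻¹ φ`, where `Ψ* v = ∑ i, v i • ψ i`,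
`Λ = λ I + ∑ i, ψ i ψ i*`, `K` is the Gram matrix and `k(φ) = (⟪ψ i, φ⟫)_i`. -/
theorem stmt2 {H : Type*} [NormedAddCommGroup H] [InnerProductSpace ℝ H]
    {n : ℕ} (ψ : Fin n → H) (lam : ℝ) (hlam : 0 < lam)
    (K : Matrix (Fin n) (Fin n) ℝ) (hK : ∀ i j, K i j = ⟪ψ i, ψ j⟫)
    (Λ Λinv : H →ₗ[ℝ] H)
    (hΛ : ∀ θ : H, Λ θ = lam • θ + ∑ i, ⟪ψ i, θ⟫ • ψ i)
    (hΛinv₁ : ∀ θ : H, Λinv (Λ θ) = θ) (hΛinv₂ : ∀ θ : H, Λ (Λinv θ) = θ)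
    (φ : H) :
    φ = (∑ i, ((K + lam • (1 : Matrix (Fin n) (Fin n) ℝ))⁻¹.mulVec
            (fun j => ⟪ψ j, φ⟫)) i • ψ i)
        + lam • Λinv φ := by
  set M := K + lam • (1 : Matrix (Fin n) (Fin n) ℝ) with hM
  set θ := Λinv φ with hθ
  -- quadratic form
  have key : ∀ x : Fin n → ℝ, x ⬝ᵥ M.mulVec x
      = ⟪∑ i, x i • ψ i, ∑ j, x j • ψ j⟫ + lam * ∑ i, x i * x i := by
    intro x
    rw [hM]
    simp only [Matrix.add_mulVec, Matrix.smul_mulVec, Matrix.one_mulVec,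
      dotProduct_add, dotProduct_smul, smul_eq_mul]
    congr 1
    simp only [dotProduct, Matrix.mulVec, hK, sum_inner, inner_sum,
      real_inner_smul_left, real_inner_smul_right, Finset.mul_sum]
    refine Finset.sum_congr rfl fun i _ => Finset.sum_congr rfl fun j _ => by
      rw [real_inner_comm (ψ i)]; ring
  -- M invertible
  have hunit : IsUnit M.det := by
    rw [← Matrix.isUnit_iff_isUnit_det, ← Matrix.mulVec_injective_iff_isUnit]
    have h0 : ∀ v : Fin n → ℝ, M.mulVec v = 0 → v = 0 := by
      intro v hv
      have hq : v ⬝ᵥ M.mulVec v = 0 := by rw [hv]; simp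
      rw [key v] at hq
      have h1 : (0:ℝ) ≤ ⟪∑ i, v i • ψ i, ∑ j, v j • ψ j⟫ := real_inner_self_nonneg
      have h2 : (0:ℝ) ≤ ∑ i, v i * v i := Finset.sum_nonneg fun i _ => mul_self_nonneg _
      have h3 : ∑ i, v i * v i = 0 := by nlinarith
      funext i
      have := (Finset.sum_eq_zero_iff_of_nonneg (fun i _ => mul_self_nonneg (v i))).mp h3 i (Finset.mem_univ i)
      simpa [mul_self_eq_zero] using this
    intro x y hxy
    have : M.mulVec (x - y) = 0 := by
      rw [Matrix.mulVec_sub, hxy, sub_self]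
    have := h0 _ this
    exact sub_eq_zero.mp this
  -- key linear identity
  have hMk : M.mulVec (fun j => ⟪ψ j, θ⟫) = fun j => ⟪ψ j, φ⟫ := by
    funext i
    have hφ : φ = lam • θ + ∑ j, ⟪ψ j, θ⟫ • ψ j := by
      rw [← hΛ θ, hθ, hΛinv₂]
    conv_rhs => rw [hφ]
    rw [hM]
    simp only [Matrix.add_mulVec, Matrix.smul_mulVec, Matrix.one_mulVec,
      Pi.add_apply, Pi.smul_apply, smul_eq_mul, inner_add_right, inner_sum,
      real_inner_smul_right]
    rw [add_comm]
    congr 1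
    simp only [Matrix.mulVec, dotProduct, hK]
    refine Finset.sum_congr rfl fun j _ => by ring
  have hinv : M⁻¹.mulVec (fun j => ⟪ψ j, φ⟫) = fun j => ⟪ψ j, θ⟫ := by
    rw [← hMk, Matrix.mulVec_mulVec, Matrix.nonsing_inv_mul M hunit, Matrix.one_mulVec]
  rw [hinv]
  rw [add_comm, ← hΛ θ, hθ, hΛinv₂]
end

section
/- Let H be a Hilbert space, let a_1, …, a_t ∈ H and b_1, …, b_t ∈ ℝ with |b_i| ≤ ε for all i, and let λ ≥ 0. Then ‖Σ_{i=1}^t a_i b_i‖²_{M^{-1}} ≤ t ε², where M = Σ_{i=1}^t a_i a_i* + λ I and ‖x‖²_{M^{-1}} := ⟨x, M^{-1} x⟩ (assume λ > 0 or M invertible so M^{-1} exists). -/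
open scoped RealInnerProductSpace BigOperators

/-- Hilbert-space version of Lemma 8 of Zanette et al. 2020:
if `|b i| ≤ ε` for all `i` and `M = ∑ i, a i (a i)* + λ I` with `λ > 0`, then
`‖∑ i, b i • a i‖²_{M⁻¹} = ⟪∑ i, b i • a i, M⁻¹ (∑ i, b i • a i)⟫ ≤ t ε²`. -/
theorem stmt4 {H : Type*} [NormedAddCommGroup H] [InnerProductSpace ℝ H]
    {t : ℕ} (a : Fin t → H) (b : Fin t → ℝ) (ε : ℝ)
    (hb : ∀ i, |b i| ≤ ε)
    (lam : ℝ) (hlam : 0 < lam)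
    (M Minv : H →ₗ[ℝ] H)
    (hM : ∀ θ : H, M θ = (∑ i, ⟪a i, θ⟫ • a i) + lam • θ)
    (hMinv₁ : ∀ θ : H, Minv (M θ) = θ) (hMinv₂ : ∀ θ : H, M (Minv θ) = θ) :
    ⟪∑ i, b i • a i, Minv (∑ i, b i • a i)⟫ ≤ (t : ℝ) * ε ^ 2 := by
  set v : H := ∑ i, b i • a i with hv
  set w : H := Minv v with hw
  set c : Fin t → ℝ := fun i => ⟪a i, w⟫ with hc
  have hMw : M w = v := hMinv₂ v
  have h1 : ⟪v, w⟫ = (∑ i, c i ^ 2) + lam * ‖w‖ ^ 2 := by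
    calc ⟪v, w⟫ = ⟪M w, w⟫ := by rw [hMw]
    _ = ⟪(∑ i, ⟪a i, w⟫ • a i) + lam • w, w⟫ := by rw [hM]
    _ = (∑ i, c i ^ 2) + lam * ‖w‖ ^ 2 := by
        rw [inner_add_left, sum_inner, real_inner_smul_left,
          real_inner_self_eq_norm_sq]
        congr 1
        refine Finset.sum_congr rfl fun i _ => ?_
        rw [real_inner_smul_left]
        simp [hc, sq]
  have h2 : ⟪v, w⟫ = ∑ i, b i * c i := by
    rw [hv, sum_inner]
    exact Finset.sum_congr rfl fun i _ => by rw [real_inner_smul_left]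
  have hS0 : 0 ≤ ⟪v, w⟫ := by
    rw [h1]; positivity
  have hcle : (∑ i, c i ^ 2) ≤ ⟪v, w⟫ := by
    rw [h1]; nlinarith [sq_nonneg ‖w‖]
  have hble : (∑ i, b i ^ 2) ≤ (t : ℝ) * ε ^ 2 := by
    calc (∑ i, b i ^ 2) ≤ ∑ _i : Fin t, ε ^ 2 := by
          refine Finset.sum_le_sum fun i _ => ?_
          calc b i ^ 2 = |b i| ^ 2 := (sq_abs _).symm
          _ ≤ ε ^ 2 := by
              have := hb i
              have h0 : (0:ℝ) ≤ |b i| := abs_nonneg _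
              nlinarith
    _ = (t : ℝ) * ε ^ 2 := by simp [Finset.sum_const, mul_comm]
  have hcs : (∑ i, b i * c i) ^ 2 ≤ (∑ i, b i ^ 2) * (∑ i, c i ^ 2) :=
    Finset.sum_mul_sq_le_sq_mul_sq Finset.univ b c
  have key : ⟪v, w⟫ ^ 2 ≤ ((t : ℝ) * ε ^ 2) * ⟪v, w⟫ := by
    have hc0 : 0 ≤ ∑ i, c i ^ 2 := Finset.sum_nonneg fun i _ => sq_nonneg _
    have ht0 : 0 ≤ (t : ℝ) * ε ^ 2 := by positivity
    nlinarith [hcs, hcle, hble, h2, hS0]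
  rcases hS0.eq_or_lt with h | h
  · rw [← h]; positivity
  · nlinarith
end

section
/- Let H be a Hilbert space, and x_1, …, x_t ∈ H with ‖x_i‖ ≤ L. Let λ > 0, Λ_0 = λ I, and Λ_i = Λ_0 + Σ_{j≤i} x_j x_j*. Let K_t ∈ ℝ^{t×t} be the Gram matrix [K_t]_{ij} = ⟨x_i, x_j⟩. Then Σ_{i=1}^t min{1, ⟨x_i, Λ_{i−1}^{-1} x_i⟩} ≤ 2 log det(I + K_t / λ). -/
open scoped RealInnerProductSpace Matrix BigOperators

/-!
Write `q i = ⟪x i, Λ_{i-1}⁻¹ x i⟫`. Since `Λ_i = Λ_{i-1} + x i (x i)*`, the matrix determinant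
lemma gives `det Λ_i = det Λ_{i-1} * (1 + q i)`, so `∏ i, (1 + q i) = det Λ_t / λ ^ d`, and by the
Weinstein–Aronszajn identity `det (λ I + X Xᵀ) = λ ^ d det (I + Xᵀ X / λ)` this equals
`det (I + K / λ)`. Coordinates in an orthonormal basis of `span {x i}` make all of this
finite-dimensional. The bound then follows termwise from `min 1 q ≤ 2 log (1 + q)` for `q ≥ 0`.
-/

open Finset Matrix

lemma min_one_le_two_mul_log_one_add {q : ℝ} (hq : 0 ≤ q) : min 1 q ≤ 2 * Real.log (1 + q) :=
  calc min 1 q ≤ 2 * (2 * q / (q + 2)) := by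
        rw [← mul_div_assoc, le_div_iff₀ (by linarith)]
        rcases le_total 1 q with h | h
        · rw [min_eq_left h]; linarith
        · rw [min_eq_right h]; nlinarith
    _ ≤ 2 * Real.log (1 + q) := by gcongr; exact Real.le_log_one_add_of_nonneg hq

namespace Matrix

variable {ι n R : Type*} [Fintype n] [DecidableEq n] [CommRing R]

/-- `A + w zᵀ = A (1 + u zᵀ)`, so no invertibility of `A` is needed. -/
theorem det_add_vecMulVec_of_mulVec_eq (A : Matrix n n R) {u w : n → R} (z : n → R)
    (h : A *ᵥ u = w) : (A + vecMulVec w z).det = A.det * (1 + z ⬝ᵥ u) := by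
  rw [← h, ← mul_vecMulVec, ← mul_one_add, det_mul, vecMulVec_eq Unit,
    det_one_add_replicateCol_mul_replicateRow]

theorem smul_one_add_sum_vecMulVec_mulVec (c : R) (v : ι → n → R) (s : Finset ι) (w : n → R) :
    (c • 1 + ∑ j ∈ s, vecMulVec (v j) (v j)) *ᵥ w = c • w + ∑ j ∈ s, (v j ⬝ᵥ w) • v j := by
  simp [add_mulVec, sum_mulVec, vecMulVec_mulVec, smul_mulVec]

theorem det_smul_one_add_sum_vecMulVec [Fintype ι] [LinearOrder ι] (c : R) (v u : ι → n → R)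
    (hu : ∀ i, c • u i + ∑ j ∈ univ.filter (· < i), (v j ⬝ᵥ u i) • v j = v i) :
    (c • 1 + ∑ j, vecMulVec (v j) (v j)).det = c ^ Fintype.card n * ∏ i, (1 + v i ⬝ᵥ u i) := by
  -- Partial sums over lower sets `s`: adding the maximum `a` of `s` is a rank-one update of
  -- `c • 1 + ∑_{j < a} v j (v j)ᵀ`, whose solution `u a` is given.
  suffices key : ∀ s : Finset ι, IsLowerSet (s : Set ι) →
      (c • 1 + ∑ j ∈ s, vecMulVec (v j) (v j)).det =
        c ^ Fintype.card n * ∏ i ∈ s, (1 + v i ⬝ᵥ u i) from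
    key univ (by simpa using isLowerSet_univ)
  intro s
  induction s using Finset.induction_on_max with
  | empty => simp
  | insert a s hlt ih =>
    intro hlow
    have ha : a ∉ s := fun ha => (hlt a ha).false
    have hs : univ.filter (· < a) = s := by
      ext y
      simp only [mem_filter, mem_univ, true_and]
      refine ⟨fun hy => ?_, hlt y⟩
      obtain rfl | hys := mem_insert.mp (hlow hy.le (mem_insert_self a s))
      · exact absurd hy (lt_irrefl y)
      · exact hys
    have hlow' : IsLowerSet (s : Set ι) := fun y z hzy hy => by
      simp only [← hs, coe_filter, mem_univ, true_and, Set.mem_ofPred_eq] at hy ⊢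
      exact hzy.trans_lt hy
    rw [sum_insert ha, prod_insert ha, add_comm (vecMulVec _ _), ← add_assoc,
      det_add_vecMulVec_of_mulVec_eq _ _ (by rw [smul_one_add_sum_vecMulVec_mulVec, ← hs, hu]),
      ih hlow']
    ring

theorem det_one_add_inv_smul_gram {𝕜 : Type*} [Field 𝕜] [Fintype ι] [DecidableEq ι]
    [LinearOrder ι] {c : 𝕜} (hc : c ≠ 0) (v u : ι → n → 𝕜)
    (hu : ∀ i, c • u i + ∑ j ∈ univ.filter (· < i), (v j ⬝ᵥ u i) • v j = v i) :
    (1 + c⁻¹ • of fun i j => v i ⬝ᵥ v j).det = ∏ i, (1 + v i ⬝ᵥ u i) := by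
  set M : Matrix n ι 𝕜 := of fun k i => v i k
  have hgram : (of fun i j => v i ⬝ᵥ v j) = Mᵀ * M := by
    ext i j; simp [M, mul_apply, dotProduct]
  have hsum : M * Mᵀ = ∑ j, vecMulVec (v j) (v j) := by
    ext a b; simp [M, mul_apply, sum_apply, vecMulVec_apply]
  calc (1 + c⁻¹ • of fun i j => v i ⬝ᵥ v j).det
      = (1 + M * (c⁻¹ • Mᵀ)).det := by rw [hgram, ← smul_mul, det_one_add_mul_comm]
    _ = (c⁻¹ • (c • 1 + ∑ j, vecMulVec (v j) (v j))).det := by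
      rw [smul_add, smul_smul, inv_mul_cancel₀ hc, one_smul, ← hsum, Matrix.mul_smul]
    _ = ∏ i, (1 + v i ⬝ᵥ u i) := by
      rw [det_smul, det_smul_one_add_sum_vecMulVec c v u hu, ← mul_assoc, ← mul_pow,
        inv_mul_cancel₀ hc, one_pow, one_mul]

end Matrix

section InnerProductSpace

variable {H : Type*} [NormedAddCommGroup H] [InnerProductSpace ℝ H]

theorem Submodule.exists_linearMap_inner_eq_dotProduct (V : Submodule ℝ H)
    [FiniteDimensional ℝ V] :
    ∃ (n : ℕ) (T : H →ₗ[ℝ] Fin n → ℝ), ∀ a ∈ V, ∀ c, ⟪a, c⟫ = T a ⬝ᵥ T c := by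
  let b := stdOrthonormalBasis ℝ V
  refine ⟨_, LinearMap.pi fun k => innerₗ H (b k : H), fun a ha c => ?_⟩
  have hrepr : ∑ k, ⟪(b k : H), a⟫ • (b k : H) = a := by
    simpa using congrArg Subtype.val (b.sum_repr' ⟨a, ha⟩)
  conv_lhs => rw [← hrepr]
  simp [sum_inner, real_inner_smul_left, dotProduct]

theorem inner_nonneg_of_smul_add_sum_inner_smul_eq {ι : Type*} {c : ℝ} (hc : 0 ≤ c) (x : ι → H)
    (s : Finset ι) {y z : H} (h : c • y + ∑ j ∈ s, ⟪x j, y⟫ • x j = z) : 0 ≤ ⟪z, y⟫ := by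
  have : ⟪z, y⟫ = c * ‖y‖ ^ 2 + ∑ j ∈ s, ⟪x j, y⟫ ^ 2 := by
    simp [← h, inner_add_left, sum_inner, real_inner_smul_left, sq]
  rw [this]
  positivity

end InnerProductSpace

theorem stmt8_general {H : Type*} [NormedAddCommGroup H] [InnerProductSpace ℝ H]
    {t : ℕ} (x : Fin t → H)
    (lam : ℝ) (hlam : 0 < lam)
    (K : Matrix (Fin t) (Fin t) ℝ) (hK : ∀ i j, K i j = ⟪x i, x j⟫)
    (Λinv : Fin t → H →ₗ[ℝ] H)
    (hΛinv₂ : ∀ (i : Fin t) (θ : H),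
      lam • Λinv i θ
        + ∑ j ∈ Finset.univ.filter (fun j => j < i), ⟪x j, Λinv i θ⟫ • x j = θ) :
    ∑ i, min 1 ⟪x i, Λinv i (x i)⟫
      ≤ 2 * Real.log ((1 + lam⁻¹ • K : Matrix (Fin t) (Fin t) ℝ).det) := by
  let V := Submodule.span ℝ (Set.range x)
  have hxV : ∀ i, x i ∈ V := fun i => Submodule.subset_span ⟨i, rfl⟩
  have : FiniteDimensional ℝ V := FiniteDimensional.span_of_finite ℝ (Set.finite_range x)
  obtain ⟨n, T, hT⟩ := V.exists_linearMap_inner_eq_dotProduct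
  have hdet : (1 + lam⁻¹ • K).det = ∏ i, (1 + ⟪x i, Λinv i (x i)⟫) := by
    have hgram : K = of fun i j => T (x i) ⬝ᵥ T (x j) := by
      ext i j; rw [hK, hT _ (hxV i), of_apply]
    rw [hgram, det_one_add_inv_smul_gram hlam.ne' _ fun i => T (Λinv i (x i))]
    · simp only [← hT _ (hxV _)]
    · intro i
      simpa only [map_add, map_sum, map_smul, ← hT _ (hxV _)] using congrArg T (hΛinv₂ i (x i))
  have hq : ∀ i, 0 ≤ ⟪x i, Λinv i (x i)⟫ := fun i =>
    inner_nonneg_of_smul_add_sum_inner_smul_eq hlam.le x _ (hΛinv₂ i (x i))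
  calc ∑ i, min 1 ⟪x i, Λinv i (x i)⟫
      ≤ ∑ i, 2 * Real.log (1 + ⟪x i, Λinv i (x i)⟫) :=
        sum_le_sum fun i _ => min_one_le_two_mul_log_one_add (hq i)
    _ = 2 * Real.log ((1 + lam⁻¹ • K).det) := by
      rw [hdet, ← mul_sum, Real.log_prod fun i _ => by linarith [hq i]]

/-- kernelized elliptical potential lemma: with `‖x i‖ ≤ L`,
`Λ_{i−1} = λ I + ∑_{j<i} x j (x j)*` (whose inverse is `Λinv i`) and `K` the Gram
matrix, `∑ i, min 1 ⟪x i, Λ_{i−1}⁻¹ (x i)⟫ ≤ 2 log det (I + K/λ)`. -/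
theorem stmt8 {H : Type*} [NormedAddCommGroup H] [InnerProductSpace ℝ H]
    {t : ℕ} (x : Fin t → H) (L : ℝ) (hL : ∀ i, ‖x i‖ ≤ L)
    (lam : ℝ) (hlam : 0 < lam)
    (K : Matrix (Fin t) (Fin t) ℝ) (hK : ∀ i j, K i j = ⟪x i, x j⟫)
    (Λinv : Fin t → H →ₗ[ℝ] H)
    (hΛinv₁ : ∀ (i : Fin t) (θ : H),
      Λinv i (lam • θ + ∑ j ∈ Finset.univ.filter (fun j => j < i), ⟪x j, θ⟫ • x j) = θ)
    (hΛinv₂ : ∀ (i : Fin t) (θ : H),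
      lam • Λinv i θ
        + ∑ j ∈ Finset.univ.filter (fun j => j < i), ⟪x j, Λinv i θ⟫ • x j = θ) :
    ∑ i, min 1 ⟪x i, Λinv i (x i)⟫
      ≤ 2 * Real.log ((1 + lam⁻¹ • K : Matrix (Fin t) (Fin t) ℝ).det) :=
  stmt8_general x lam hlam K hK Λinv hΛinv₂
end
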